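/- Let γ be a positive trace-class operator on a Hilbert space H with trace 1, and let p = |φ⟩⟨φ| be a rank-one orthogonal projection. If γ converges to p weakly (i.e., ⟨ψ, γψ'⟩ → ⟨ψ, pψ'⟩ for all ψ, ψ', or equivalently in expectation against compact operators), then γ converges to p in trace norm. -/

import Mathlib

/-!
Write `P = |φ⟩⟨φ|`, `Q = 1 - P`, `l = ⟨φ, γ φ⟩` and `v = Q γ φ`. Then
`γ - P = QγQ + |v⟩⟨φ| + |φ⟩⟨v| + (l - 1) P`, where `QγQ ≥ 0` has trace `1 - l`, and
`‖v‖² = ‖γ φ‖² - l² ≤ 1 - l` because `γ² ≤ γ` for a positive operator of trace one.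
Since `|Tr (B S)| ≤ Tr S` for `S ≥ 0` and `‖B‖ ≤ 1`, every such `B` gives
`|Tr (B (γ - P))| ≤ 2 (1 - l) + 2 √(1 - l)`, which tends to `0` because weak convergence gives
`l → ⟨φ, P φ⟩ = 1`.
-/

open scoped ComplexOrder InnerProductSpace ENNReal NNReal
open ContinuousLinearMap InnerProductSpace

theorem ENNReal.two_mul_le_add_sq (a b : ℝ≥0∞) : 2 * a * b ≤ a ^ 2 + b ^ 2 := by
  rcases eq_or_ne a ⊤ with rfl | ha
  · simp
  rcases eq_or_ne b ⊤ with rfl | hb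
  · simp
  lift a to ℝ≥0 using ha
  lift b to ℝ≥0 using hb
  exact_mod_cast _root_.two_mul_le_add_sq a b

theorem ContinuousLinearMap.nonneg_of_forall_inner_nonneg {H : Type*} [NormedAddCommGroup H]
    [InnerProductSpace ℂ H] [CompleteSpace H] {T : H →L[ℂ] H} (h : ∀ x, 0 ≤ ⟪x, T x⟫_ℂ) :
    0 ≤ T := by
  rw [nonneg_iff_isPositive, isPositive_iff_complex]
  intro x
  have hx : ⟪x, T x⟫_ℂ = (⟪x, T x⟫_ℂ).re :=
    Complex.eq_re_of_ofReal_le (r := 0) (by simpa using h x)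
  rw [← inner_conj_symm, hx, Complex.conj_ofReal]
  exact ⟨rfl, (Complex.nonneg_iff.mp (h x)).1⟩

namespace HilbertBasis

variable {𝕜 E ι : Type*} [RCLike 𝕜] [NormedAddCommGroup E] [InnerProductSpace 𝕜 E]
  (e : HilbertBasis ι 𝕜 E)

theorem tsum_enorm_inner_sq (x : E) : ∑' i, ‖⟪e i, x⟫_𝕜‖ₑ ^ 2 = ‖x‖ₑ ^ 2 := by
  have h := lp.hasSum_norm (p := 2) (by norm_num) (e.repr x)
  simp only [e.repr_apply_apply, LinearIsometryEquiv.norm_map, ENNReal.toReal_ofNat,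
    Real.rpow_two] at h
  simp_rw [← ofReal_norm, ← ENNReal.ofReal_pow (norm_nonneg _)]
  rw [← h.tsum_eq, ENNReal.ofReal_tsum_of_nonneg (fun _ => by positivity) h.summable]

theorem hasSum_inner_rankOne (a b : E) :
    HasSum (fun i => ⟪e i, rankOne 𝕜 a b (e i)⟫_𝕜) ⟪b, a⟫_𝕜 := by
  simpa only [rankOne_apply, inner_smul_right] using e.hasSum_inner_mul_inner b a

/-- The square of the Hilbert–Schmidt norm, computed in the basis `e`. -/
noncomputable def hsNormSq (C : E →L[𝕜] E) : ℝ≥0∞ := ∑' i, ‖C (e i)‖ₑ ^ 2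

theorem hsNormSq_comp_le (B C : E →L[𝕜] E) :
    e.hsNormSq (B ∘L C) ≤ ‖B‖ₑ ^ 2 * e.hsNormSq C := by
  rw [hsNormSq, hsNormSq, ← ENNReal.tsum_mul_left]
  exact ENNReal.tsum_le_tsum fun i => by rw [← mul_pow]; gcongr; exact B.le_opENorm _

variable [CompleteSpace E]

theorem hsNormSq_adjoint (C : E →L[𝕜] E) : e.hsNormSq (adjoint C) = e.hsNormSq C := by
  have h : ∀ i j, ‖⟪e j, adjoint C (e i)⟫_𝕜‖ₑ = ‖⟪e i, C (e j)⟫_𝕜‖ₑ := fun i j => by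
    rw [adjoint_inner_right, ← inner_conj_symm, RCLike.enorm_conj]
  simp_rw [hsNormSq, ← e.tsum_enorm_inner_sq, h]
  exact ENNReal.tsum_comm

theorem enorm_apply_sq_le_hsNormSq (C : E →L[𝕜] E) (x : E) :
    ‖C x‖ₑ ^ 2 ≤ e.hsNormSq C * ‖x‖ₑ ^ 2 := by
  rw [← e.hsNormSq_adjoint, hsNormSq, ← ENNReal.tsum_mul_right, ← e.tsum_enorm_inner_sq]
  refine ENNReal.tsum_le_tsum fun i => ?_
  rw [← adjoint_inner_left, ← mul_pow]
  gcongr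
  simpa only [enorm_eq_nnnorm, ← ENNReal.coe_mul, ENNReal.coe_le_coe]
    using nnnorm_inner_le_nnnorm _ _

end HilbertBasis

section PositiveTraceClass

variable {H ι : Type*} [NormedAddCommGroup H] [InnerProductSpace ℂ H] [CompleteSpace H]
  (e : HilbertBasis ι ℂ H) {T : H →L[ℂ] H} {t : ℝ}

theorem ContinuousLinearMap.norm_sqrt_apply_sq (hT : 0 ≤ T) (x : H) :
    ‖CFC.sqrt T x‖ ^ 2 = (⟪x, T x⟫_ℂ).re := by
  rw [← inner_self_eq_norm_sq (𝕜 := ℂ), RCLike.re_to_complex, ← adjoint_inner_right,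
    (CFC.sqrt_nonneg T).isSelfAdjoint.adjoint_eq, ← mul_apply_eq_comp,
    CFC.sqrt_mul_sqrt_self T hT]

theorem HilbertBasis.hasSum_norm_sqrt_apply_sq (hT : 0 ≤ T)
    (ht : HasSum (fun i => ⟪e i, T (e i)⟫_ℂ) t) :
    HasSum (fun i => ‖CFC.sqrt T (e i)‖ ^ 2) t := by
  simpa only [norm_sqrt_apply_sq hT, Complex.ofReal_re] using Complex.hasSum_re ht

theorem HilbertBasis.hsNormSq_sqrt (hT : 0 ≤ T) (ht : HasSum (fun i => ⟪e i, T (e i)⟫_ℂ) t) :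
    e.hsNormSq (CFC.sqrt T) = ENNReal.ofReal t := by
  have h := e.hasSum_norm_sqrt_apply_sq hT ht
  simp_rw [HilbertBasis.hsNormSq, ← ofReal_norm, ← ENNReal.ofReal_pow (norm_nonneg _)]
  rw [← h.tsum_eq, ENNReal.ofReal_tsum_of_nonneg (fun _ => by positivity) h.summable]

theorem HilbertBasis.norm_apply_sq_le_mul_re_inner (hT : 0 ≤ T)
    (ht : HasSum (fun i => ⟪e i, T (e i)⟫_ℂ) t) (x : H) :
    ‖T x‖ ^ 2 ≤ t * (⟪x, T x⟫_ℂ).re := by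
  have ht0 : 0 ≤ t := (e.hasSum_norm_sqrt_apply_sq hT ht).nonneg fun _ => sq_nonneg _
  have h := e.enorm_apply_sq_le_hsNormSq (CFC.sqrt T) (CFC.sqrt T x)
  rw [← mul_apply_eq_comp, CFC.sqrt_mul_sqrt_self T hT, e.hsNormSq_sqrt hT ht, ← ofReal_norm,
    ← ofReal_norm, ← ENNReal.ofReal_pow (norm_nonneg _), ← ENNReal.ofReal_pow (norm_nonneg _),
    ← ENNReal.ofReal_mul ht0] at h
  rw [← norm_sqrt_apply_sq hT]
  exact (ENNReal.ofReal_le_ofReal_iff (by positivity)).mp h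

/-- With `R = √T` the `i`-th term is `⟨R B† eᵢ, R eᵢ⟩`, so by AM–GM the sum is bounded by the mean
of `‖R B†‖²_HS = ‖B R‖²_HS ≤ ‖R‖²_HS` and `‖R‖²_HS = Tr T`. -/
theorem HilbertBasis.summable_and_norm_tsum_inner_comp_le (hT : 0 ≤ T)
    (ht : HasSum (fun i => ⟪e i, T (e i)⟫_ℂ) t) {B : H →L[ℂ] H} (hB : ‖B‖ ≤ 1) :
    Summable (fun i => ⟪e i, B (T (e i))⟫_ℂ) ∧ ‖∑' i, ⟪e i, B (T (e i))⟫_ℂ‖ ≤ t := by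
  set R := CFC.sqrt T
  have hR : adjoint R = R := (CFC.sqrt_nonneg T).isSelfAdjoint.adjoint_eq
  have hterm : ∀ i, ⟪e i, B (T (e i))⟫_ℂ = ⟪R (adjoint B (e i)), R (e i)⟫_ℂ := fun i => by
    rw [← CFC.sqrt_mul_sqrt_self T hT, mul_apply_eq_comp, ← adjoint_inner_left,
      ← adjoint_inner_left R, hR]
  have hRB : e.hsNormSq (R ∘L adjoint B) = e.hsNormSq (B ∘L R) := by
    rw [← e.hsNormSq_adjoint, adjoint_comp, adjoint_adjoint, hR]
  have hB' : ‖B‖ₑ ^ 2 ≤ 1 := pow_le_one₀ zero_le (by simpa [← ofReal_norm] using hB)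
  have h2 : 2 * ∑' i, ‖⟪e i, B (T (e i))⟫_ℂ‖ₑ ≤ 2 * ENNReal.ofReal t := calc
    2 * ∑' i, ‖⟪e i, B (T (e i))⟫_ℂ‖ₑ
      ≤ ∑' i, (‖R (adjoint B (e i))‖ₑ ^ 2 + ‖R (e i)‖ₑ ^ 2) := by
        rw [← ENNReal.tsum_mul_left]
        refine ENNReal.tsum_le_tsum fun i => ?_
        rw [hterm]
        refine le_trans ?_ (ENNReal.two_mul_le_add_sq _ _)
        rw [mul_assoc]
        gcongr
        simpa only [enorm_eq_nnnorm, ← ENNReal.coe_mul, ENNReal.coe_le_coe]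
          using nnnorm_inner_le_nnnorm _ _
    _ = e.hsNormSq (B ∘L R) + e.hsNormSq R := by rw [ENNReal.tsum_add, ← hRB]; rfl
    _ ≤ e.hsNormSq R + e.hsNormSq R := by
        gcongr
        exact (e.hsNormSq_comp_le B R).trans (mul_le_of_le_one_left zero_le hB')
    _ = 2 * ENNReal.ofReal t := by rw [e.hsNormSq_sqrt hT ht, two_mul]
  have hle := (ENNReal.mul_le_mul_iff_right two_ne_zero ENNReal.ofNat_ne_top).mp h2
  have ht0 : 0 ≤ t := (e.hasSum_norm_sqrt_apply_sq hT ht).nonneg fun _ => sq_nonneg _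
  refine ⟨.of_nnnorm ?_, ?_⟩
  · exact ENNReal.tsum_coe_ne_top_iff_summable.mp (ne_top_of_le_ne_top ENNReal.ofReal_ne_top hle)
  · rw [← ENNReal.ofReal_le_ofReal_iff ht0, ofReal_norm]
    exact enorm_tsum_le_tsum_enorm.trans hle

end PositiveTraceClass

section RankOneProjection

variable {H ι : Type*} [NormedAddCommGroup H] [InnerProductSpace ℂ H] {T : H →L[ℂ] H} {φ : H}

theorem inner_compl_rankOne_self_apply (hφ : ‖φ‖ = 1) (x : H) :
    ⟪φ, (1 - rankOne ℂ φ φ) x⟫_ℂ = 0 := by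
  simp [hφ]

variable [CompleteSpace H]

theorem conj_compl_rankOne_self_nonneg (hT : 0 ≤ T) :
    0 ≤ (1 - rankOne ℂ φ φ) ∘L T ∘L (1 - rankOne ℂ φ φ) := by
  have hcompl : IsSelfAdjoint (1 - rankOne ℂ φ φ) :=
    (IsSelfAdjoint.one _).sub (adjoint_rankOne φ φ)
  have h := ((nonneg_iff_isPositive T).mp hT).conj_adjoint (1 - rankOne ℂ φ φ)
  rwa [hcompl.adjoint_eq, ← nonneg_iff_isPositive] at h

theorem sub_rankOne_self_eq (hT : IsSelfAdjoint T) :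
    T - rankOne ℂ φ φ
      = (1 - rankOne ℂ φ φ) ∘L T ∘L (1 - rankOne ℂ φ φ)
        + rankOne ℂ ((1 - rankOne ℂ φ φ) (T φ)) φ + rankOne ℂ φ ((1 - rankOne ℂ φ φ) (T φ))
        + (⟪φ, T φ⟫_ℂ - 1) • rankOne ℂ φ φ := by
  have hsym : ∀ x, ⟪φ, T x⟫_ℂ = ⟪T φ, x⟫_ℂ := fun x => (hT.isSymmetric φ x).symm
  have hreal : starRingEnd ℂ ⟪T φ, φ⟫_ℂ = ⟪T φ, φ⟫_ℂ := by rw [inner_conj_symm, hsym]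
  ext x
  simp only [sub_apply, add_apply, comp_apply, one_apply_eq_self, smul_apply, rankOne_apply,
    map_sub, map_smul, inner_smul_left, hsym, hreal]
  module

variable (e : HilbertBasis ι ℂ H)

theorem HilbertBasis.hasSum_inner_comp_sub_rankOne (hT : IsSelfAdjoint T) (B : H →L[ℂ] H)
    {z : ℂ} (hz : HasSum
      (fun i => ⟪e i, B (((1 - rankOne ℂ φ φ) ∘L T ∘L (1 - rankOne ℂ φ φ)) (e i))⟫_ℂ) z) :
    HasSum (fun i => ⟪e i, B ((T - rankOne ℂ φ φ) (e i))⟫_ℂ)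
      (z + ⟪φ, B ((1 - rankOne ℂ φ φ) (T φ))⟫_ℂ + ⟪(1 - rankOne ℂ φ φ) (T φ), B φ⟫_ℂ
        + (⟪φ, T φ⟫_ℂ - 1) * ⟪φ, B φ⟫_ℂ) := by
  rw [sub_rankOne_self_eq hT]
  simp only [add_apply, smul_apply, map_add, map_smul, inner_add_right, inner_smul_right,
    ← comp_apply B (rankOne ℂ _ _), comp_rankOne]
  exact ((hz.add (e.hasSum_inner_rankOne _ _)).add (e.hasSum_inner_rankOne _ _)).add
    ((e.hasSum_inner_rankOne _ _).mul_left _)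

theorem HilbertBasis.hasSum_inner_compl_comp_compl (hT : IsSelfAdjoint T) (hφ : ‖φ‖ = 1)
    {t : ℂ} (ht : HasSum (fun i => ⟪e i, T (e i)⟫_ℂ) t) :
    HasSum (fun i => ⟪e i, ((1 - rankOne ℂ φ φ) ∘L T ∘L (1 - rankOne ℂ φ φ)) (e i)⟫_ℂ)
      (t - ⟪φ, T φ⟫_ℂ) := by
  have hφφ : ⟪φ, φ⟫_ℂ = 1 := by simp [hφ]
  have hvφ : ⟪(1 - rankOne ℂ φ φ) (T φ), φ⟫_ℂ = 0 := by
    rw [← inner_conj_symm, inner_compl_rankOne_self_apply hφ, map_zero]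
  rw [show (1 - rankOne ℂ φ φ) ∘L T ∘L (1 - rankOne ℂ φ φ)
      = T - rankOne ℂ φ φ - rankOne ℂ ((1 - rankOne ℂ φ φ) (T φ)) φ
        - rankOne ℂ φ ((1 - rankOne ℂ φ φ) (T φ)) - (⟪φ, T φ⟫_ℂ - 1) • rankOne ℂ φ φ by
    rw [sub_rankOne_self_eq hT]; abel]
  simp only [sub_apply, smul_apply, inner_sub_right, inner_smul_right]
  have h := (((ht.sub (e.hasSum_inner_rankOne φ φ)).sub
    (e.hasSum_inner_rankOne ((1 - rankOne ℂ φ φ) (T φ)) φ)).sub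
    (e.hasSum_inner_rankOne φ ((1 - rankOne ℂ φ φ) (T φ)))).sub
    ((e.hasSum_inner_rankOne φ φ).mul_left (⟪φ, T φ⟫_ℂ - 1))
  rwa [hφφ, hvφ, inner_compl_rankOne_self_apply hφ, sub_zero, sub_zero, mul_one, sub_sub,
    add_sub_cancel] at h

theorem HilbertBasis.norm_compl_rankOne_self_apply_sq_le (hT : 0 ≤ T)
    (ht : HasSum (fun i => ⟪e i, T (e i)⟫_ℂ) 1) (hφ : ‖φ‖ = 1) :
    ‖(1 - rankOne ℂ φ φ) (T φ)‖ ^ 2 ≤ 1 - (⟪φ, T φ⟫_ℂ).re := by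
  set c := ⟪φ, T φ⟫_ℂ
  set v := (1 - rankOne ℂ φ φ) (T φ)
  have horth : ⟪v, c • φ⟫_ℂ = 0 := by
    rw [inner_smul_right, ← inner_conj_symm, inner_compl_rankOne_self_apply hφ, map_zero,
      mul_zero]
  have hpyth : ‖T φ‖ ^ 2 = ‖v‖ ^ 2 + ‖c‖ ^ 2 := calc
    ‖T φ‖ ^ 2 = ‖v + c • φ‖ ^ 2 := by simp [v, c]
    _ = ‖v‖ ^ 2 + ‖c‖ ^ 2 := by
      rw [sq, sq, sq, norm_add_sq_eq_norm_sq_add_norm_sq_of_inner_eq_zero _ _ horth, norm_smul,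
        hφ, mul_one]
  have hTφ : ‖T φ‖ ^ 2 ≤ 1 * c.re := e.norm_apply_sq_le_mul_re_inner hT (by exact_mod_cast ht) φ
  have hre : c.re ^ 2 ≤ ‖c‖ ^ 2 := by
    rw [← sq_abs]; exact pow_le_pow_left₀ (abs_nonneg _) (Complex.abs_re_le_norm c) 2
  nlinarith [sq_nonneg (1 - c.re)]

theorem HilbertBasis.norm_tsum_inner_comp_sub_rankOne_le (hT : 0 ≤ T)
    (ht : HasSum (fun i => ⟪e i, T (e i)⟫_ℂ) 1) (hφ : ‖φ‖ = 1) {B : H →L[ℂ] H} (hB : ‖B‖ ≤ 1) :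
    ‖∑' i, ⟪e i, B ((T - rankOne ℂ φ φ) (e i))⟫_ℂ‖
      ≤ 2 * (1 - (⟪φ, T φ⟫_ℂ).re) + 2 * √(1 - (⟪φ, T φ⟫_ℂ).re) := by
  set l := (⟪φ, T φ⟫_ℂ).re
  set v := (1 - rankOne ℂ φ φ) (T φ)
  have hl : ⟪φ, T φ⟫_ℂ = l := Complex.eq_re_of_ofReal_le (r := 0)
    (by simpa using ((nonneg_iff_isPositive T).mp hT).inner_nonneg_right φ)
  have hv : ‖v‖ ^ 2 ≤ 1 - l := e.norm_compl_rankOne_self_apply_sq_le hT ht hφ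
  have hvle : ‖v‖ ≤ √(1 - l) := by simpa using Real.abs_le_sqrt hv
  have hl1 : l ≤ 1 := by nlinarith [sq_nonneg ‖v‖]
  have htr : HasSum
      (fun i => ⟪e i, ((1 - rankOne ℂ φ φ) ∘L T ∘L (1 - rankOne ℂ φ φ)) (e i)⟫_ℂ)
      ((1 - l : ℝ) : ℂ) := by
    simpa [hl] using e.hasSum_inner_compl_comp_compl (IsSelfAdjoint.of_nonneg hT) hφ ht
  obtain ⟨hsum, hle⟩ :=
    e.summable_and_norm_tsum_inner_comp_le (conj_compl_rankOne_self_nonneg hT) htr hB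
  rw [(e.hasSum_inner_comp_sub_rankOne (IsSelfAdjoint.of_nonneg hT) B hsum.hasSum).tsum_eq, hl]
  have hBφ : ‖B φ‖ ≤ 1 := (B.le_of_opNorm_le hB φ).trans (by rw [hφ, one_mul])
  have hBv : ‖B v‖ ≤ ‖v‖ := (B.le_of_opNorm_le hB v).trans (by rw [one_mul])
  calc _ ≤ ‖∑' i, _‖ + ‖⟪φ, B v⟫_ℂ‖ + ‖⟪v, B φ⟫_ℂ‖ + ‖((l : ℂ) - 1) * ⟪φ, B φ⟫_ℂ‖ :=
        norm_add₄_le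
    _ ≤ (1 - l) + ‖φ‖ * ‖B v‖ + ‖v‖ * ‖B φ‖ + |l - 1| * (‖φ‖ * ‖B φ‖) := by
        gcongr
        · exact norm_inner_le_norm _ _
        · exact norm_inner_le_norm _ _
        · rw [norm_mul, ← Complex.ofReal_one, ← Complex.ofReal_sub, Complex.norm_real,
            Real.norm_eq_abs]
          gcongr
          exact norm_inner_le_norm _ _
    _ ≤ (1 - l) + √(1 - l) + √(1 - l) + (1 - l) := by
        rw [hφ, abs_sub_comm, abs_of_nonneg (sub_nonneg.mpr hl1), one_mul, one_mul]
        gcongr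
        · exact hBv.trans hvle
        · exact (mul_le_of_le_one_right (norm_nonneg v) hBφ).trans hvle
        · exact mul_le_of_le_one_right (sub_nonneg.mpr hl1) hBφ
    _ = 2 * (1 - l) + 2 * √(1 - l) := by ring

end RankOneProjection

/-- **Weak convergence to a rank-one projection upgrades to trace-norm
convergence**: if `γ n` are positive trace-class operators of trace one on a
Hilbert space `H` (trace computed in a Hilbert basis `e`), `p = |φ⟩⟨φ|` is a
rank-one orthogonal projection, and `⟨ψ, γ n ψ'⟩ → ⟨ψ, p ψ'⟩` for all
`ψ, ψ'`, then `γ n → p` in trace norm, where the trace norm of a trace-class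
operator `A` is `sup_{‖B‖ ≤ 1} |Tr (B A)|`. -/
theorem traceNorm_convergence_of_weak
    {H : Type*} [NormedAddCommGroup H] [InnerProductSpace ℂ H] [CompleteSpace H]
    {ι : Type*} (e : HilbertBasis ι ℂ H)
    (γ : ℕ → H →L[ℂ] H) (φ : H) (hφ : ‖φ‖ = 1)
    (p : H →L[ℂ] H) (hp : ∀ ψ : H, p ψ = (inner ℂ φ ψ : ℂ) • φ)
    (hpos : ∀ (n : ℕ) (ψ : H), 0 ≤ (inner ℂ ψ (γ n ψ) : ℂ))
    (htrace : ∀ n : ℕ, HasSum (fun i : ι => (inner ℂ (e i) (γ n (e i)) : ℂ)) 1)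
    (hweak : ∀ ψ ψ' : H,
      Filter.Tendsto (fun n : ℕ => (inner ℂ ψ (γ n ψ') : ℂ)) Filter.atTop
        (nhds (inner ℂ ψ (p ψ')))) :
    Filter.Tendsto
      (fun n : ℕ => ⨆ B : {B : H →L[ℂ] H // ‖B‖ ≤ 1},
        ‖∑' i : ι, (inner ℂ (e i) (B.1 ((γ n - p) (e i))) : ℂ)‖)
      Filter.atTop (nhds 0) := by
  obtain rfl : p = rankOne ℂ φ φ := ext hp
  have hl : Filter.Tendsto (fun n => (⟪φ, γ n φ⟫_ℂ).re) Filter.atTop (nhds 1) := by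
    simpa [hφ, Function.comp_def] using (Complex.continuous_re.tendsto _).comp (hweak φ φ)
  have hbound : Filter.Tendsto
      (fun n => 2 * (1 - (⟪φ, γ n φ⟫_ℂ).re) + 2 * √(1 - (⟪φ, γ n φ⟫_ℂ).re))
      Filter.atTop (nhds 0) := by
    have hf : Continuous fun x : ℝ => 2 * (1 - x) + 2 * √(1 - x) := by fun_prop
    simpa [Function.comp_def] using (hf.tendsto 1).comp hl
  refine squeeze_zero (fun n => Real.iSup_nonneg fun _ => norm_nonneg _) (fun n => ?_) hbound
  have hle (B : {B : H →L[ℂ] H // ‖B‖ ≤ 1}) :=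
    e.norm_tsum_inner_comp_sub_rankOne_le (nonneg_of_forall_inner_nonneg (hpos n)) (htrace n) hφ B.2
  exact Real.iSup_le hle ((norm_nonneg _).trans (hle ⟨0, by simp⟩))
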